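/- Let K be an infinite language over a finite totally ordered alphabet (Σ, <) such that L := pref(K) satisfies the Setup with Hypotheses (H2) and (H3), and let S be the abstract numeration system built on L = pref(K). If (w⁽ⁿ⁾)_{n≥0} is a sequence of words of K converging to an infinite word w (so that w ∈ adh(L)), then lim_{n→∞} val_S(w⁽ⁿ⁾) / v_{q₀}(|w⁽ⁿ⁾|) = α_w. -/

import Mathlib

open Filter Topology

/-- The prefix of length `ℓ` of an infinite word `w : ℕ → A`. -/
def prefixOf {A : Type*} (w : ℕ → A) (ℓ : ℕ) : List A := List.ofFn (fun i : Fin ℓ => w i)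

/-- The set of prefixes of words of a language `L`. -/
def pref {A : Type*} (L : Set (List A)) : Set (List A) := {u | ∃ v ∈ L, u <+: v}

/-- The adherence of a language. -/
def adh {A : Type*} (L : Set (List A)) : Set (ℕ → A) :=
  {w | ∀ ℓ : ℕ, prefixOf w ℓ ∈ pref L}

/-- The center of a language: the finite prefixes of elements of the adherence. -/
def centre {A : Type*} (L : Set (List A)) : Set (List A) :=
  {u | ∃ w ∈ adh L, u = prefixOf w u.length}

/-- Transition function of a deterministic automaton extended to words. -/
def deltaStar {Q A : Type*} (δ : Q → A → Q) (q : Q) (w : List A) : Q := w.foldl δ q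

/-- `ucomp δ F q n` : number of words of length `n` accepted from state `q`. -/
noncomputable def ucomp {Q A : Type*} (δ : Q → A → Q) (F : Set Q) (q : Q) (n : ℕ) : ℕ :=
  {z : List A | z.length = n ∧ deltaStar δ q z ∈ F}.ncard

/-- `vcomp δ F q n` : number of words of length at most `n` accepted from state `q`. -/
noncomputable def vcomp {Q A : Type*} (δ : Q → A → Q) (F : Set Q) (q : Q) (n : ℕ) : ℕ :=
  ∑ m ∈ Finset.range (n + 1), ucomp δ F q m

open scoped Classical in
/-- For a word `y`, `alphaFin L r y = s₀ + Σ_{x ∈ centre(L), |x| = |y|, x <_lex y} r x`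
where `s₀ = 1 - r ε`.  (Words of length `|y|` are enumerated as `List.ofFn f`
for `f : Fin |y| → A`.) -/
noncomputable def alphaFin {A : Type*} [Fintype A] [LinearOrder A]
    (L : Set (List A)) (r : List A → ℝ) (y : List A) : ℝ :=
  (1 - r []) +
    ∑ f : Fin y.length → A,
      if List.ofFn f ∈ centre L ∧ List.Lex (· < ·) (List.ofFn f) y then r (List.ofFn f)
      else 0

/-- Genealogical (radix) order: first by length, then lexicographically. -/
def genLt {A : Type*} [LinearOrder A] (x y : List A) : Prop :=
  x.length < y.length ∨ (x.length = y.length ∧ List.Lex (· < ·) x y)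

/-- The `S`-numerical value of a word `w` of `L`: the number of words of `L`
genealogically smaller than `w`. -/
noncomputable def valS {A : Type*} [LinearOrder A] (L : Set (List A)) (w : List A) : ℕ :=
  {x ∈ L | genLt x w}.ncard

/-!
Let `N = |y|` for a word `y ∈ L`. The words of `L` genealogically below `y` are the words shorter
than `y`, a fraction `1 - u(N)/v(N)` of `v(N)`, and the words of length `N` lexicographically below
`y`. If `P` is a prefix of `y` of length `ℓ`, the number of the latter lies between the sum `S` of
`u_{δ(q₀,x)}(N - ℓ)` over the words `x` of length `ℓ` lexicographically below `P`, and
`S + u_{δ(q₀,P)}(N - ℓ)`. Dividing by `v(N)` and applying (H2) with `P = w[0,ℓ-1]`, the ratio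
`val_S(w⁽ⁿ⁾)/v(|w⁽ⁿ⁾|)` is squeezed between quantities tending to `α_P` and `α_P + r_P`. The
restriction to `centre(L)` in `α_P` is harmless because `r` vanishes off the centre: a word outside
it has no extension in `L` of some length, by compactness of `Σ^ℕ`. Finally `r_P → 0` as `ℓ → ∞`
by (H3).
-/

theorem tendsto_of_forall_eventually_between {ι κ α : Type*} [TopologicalSpace α] [LinearOrder α]
    [OrderTopology α] {f : Filter ι} {g : Filter κ} [g.NeBot] {a : ι → α} {lo hi : κ → ι → α}
    {llo lhi : κ → α} {c : α} (hlo : ∀ k, Tendsto (lo k) f (𝓝 (llo k)))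
    (hhi : ∀ k, Tendsto (hi k) f (𝓝 (lhi k))) (hllo : Tendsto llo g (𝓝 c))
    (hlhi : Tendsto lhi g (𝓝 c)) (hbetween : ∀ k, ∀ᶠ i in f, lo k i ≤ a i ∧ a i ≤ hi k i) :
    Tendsto a f (𝓝 c) := by
  refine tendsto_order.2 ⟨fun b hb => ?_, fun b hb => ?_⟩
  · obtain ⟨k, hk⟩ := (hllo.eventually (lt_mem_nhds hb)).exists
    filter_upwards [(hlo k).eventually (lt_mem_nhds hk), hbetween k] with i hi hi'
    exact hi.trans_le hi'.1
  · obtain ⟨k, hk⟩ := (hlhi.eventually (gt_mem_nhds hb)).exists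
    filter_upwards [(hhi k).eventually (gt_mem_nhds hk), hbetween k] with i hi hi'
    exact hi'.2.trans_lt hi

section Words

variable {Γ : Type*}

theorem prefixOf_length (w : ℕ → Γ) (n : ℕ) : (prefixOf w n).length = n :=
  List.length_ofFn

theorem take_prefixOf (w : ℕ → Γ) {m n : ℕ} (h : m ≤ n) :
    (prefixOf w n).take m = prefixOf w m := by
  apply List.ext_getElem <;> simp [prefixOf, h]

theorem prefixOf_prefix (w : ℕ → Γ) {m n : ℕ} (h : m ≤ n) : prefixOf w m <+: prefixOf w n :=
  take_prefixOf w h ▸ List.take_prefix _ _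

theorem prefixOf_getD (l : List Γ) (a : Γ) : prefixOf (fun i => l.getD i a) l.length = l := by
  apply List.ext_getElem <;> simp [prefixOf]

theorem lex_append_append_iff {r : Γ → Γ → Prop} {x y s t : List Γ} (h : x.length = y.length) :
    List.Lex r (x ++ s) (y ++ t) ↔ List.Lex r x y ∨ (x = y ∧ List.Lex r s t) := by
  induction x generalizing y with
  | nil => simp_all [List.length_eq_zero_iff.1 h.symm]
  | cons a x ih =>
    obtain _ | ⟨b, y⟩ := y
    · simp at h
    simp only [List.cons_append, List.cons_lex_cons_iff, ih (Nat.succ_inj.1 h), List.cons.injEq]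
    tauto

theorem deltaStar_append {Q : Type*} (δ : Q → Γ → Q) (q : Q) (x y : List Γ) :
    deltaStar δ q (x ++ y) = deltaStar δ (deltaStar δ q x) y :=
  List.foldl_append

end Words

section Counting

variable {Γ : Type*}

theorem finite_setOf_length_eq [Finite Γ] (n : ℕ) (p : List Γ → Prop) :
    {z : List Γ | z.length = n ∧ p z}.Finite :=
  (List.finite_length_eq Γ n).subset fun _ hz => hz.1

theorem finite_setOf_length_lt [Finite Γ] (n : ℕ) (p : List Γ → Prop) :
    {z : List Γ | z.length < n ∧ p z}.Finite :=
  ((Set.finite_Iio n).biUnion fun m _ => finite_setOf_length_eq m p).subset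
    fun _ hz => Set.mem_biUnion hz.1 ⟨rfl, hz.2⟩

theorem ncard_setOf_length_eq [Fintype Γ] (n : ℕ) (p : List Γ → Prop) [DecidablePred p] :
    {z : List Γ | z.length = n ∧ p z}.ncard =
      ∑ f : Fin n → Γ, if p (List.ofFn f) then 1 else 0 := by
  have himage : {z : List Γ | z.length = n ∧ p z} =
      List.ofFn '' {f : Fin n → Γ | p (List.ofFn f)} := by
    ext z
    constructor
    · rintro ⟨rfl, hz⟩
      exact ⟨fun i => z[i], by simpa [List.ofFn_getElem] using hz, List.ofFn_getElem⟩
    · rintro ⟨f, hf, rfl⟩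
      exact ⟨List.length_ofFn, hf⟩
  rw [himage, Set.ncard_image_of_injective _ List.ofFn_injective, ← Finset.card_filter,
    ← Set.ncard_coe_finset]
  congr
  ext
  simp

theorem ncard_setOf_length_lt [Finite Γ] (n : ℕ) (p : List Γ → Prop) :
    {z : List Γ | z.length < n ∧ p z}.ncard =
      ∑ m ∈ Finset.range n, {z : List Γ | z.length = m ∧ p z}.ncard := by
  induction n with
  | zero => simp
  | succ n ih =>
    have hsplit : {z : List Γ | z.length < n + 1 ∧ p z} =
        {z | z.length < n ∧ p z} ∪ {z | z.length = n ∧ p z} := by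
      ext z
      simp only [Set.mem_ofPred_eq, Set.mem_union, Nat.lt_succ_iff_lt_or_eq]
      tauto
    have hdisj : Disjoint {z : List Γ | z.length < n ∧ p z} {z | z.length = n ∧ p z} :=
      Set.disjoint_left.2 fun _ h1 h2 => h1.1.ne h2.1
    rw [hsplit, Set.ncard_union_eq hdisj (finite_setOf_length_lt n p)
      (finite_setOf_length_eq n p), ih, Finset.sum_range_succ]

end Counting

section LexRank

variable {Γ : Type*} [LinearOrder Γ] {Q : Type*} (δ : Q → Γ → Q) (F : Set Q)

noncomputable def lexRank (q : Q) (y : List Γ) : ℕ :=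
  {z : List Γ | z.length = y.length ∧ deltaStar δ q z ∈ F ∧ List.Lex (· < ·) z y}.ncard

variable [Fintype Γ]

open scoped Classical in
noncomputable def sumLexBelow {M : Type*} [AddCommMonoid M] (g : List Γ → M) (y : List Γ) : M :=
  ∑ f ∈ Finset.univ.filter (fun f : Fin y.length → Γ => List.Lex (· < ·) (List.ofFn f) y),
    g (List.ofFn f)

theorem lexRank_le_ucomp (q : Q) (y : List Γ) : lexRank δ F q y ≤ ucomp δ F q y.length :=
  Set.ncard_le_ncard (fun _ hz => ⟨hz.1, hz.2.1⟩) (finite_setOf_length_eq _ _)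

open scoped Classical in
theorem lexRank_append (q : Q) (x y : List Γ) :
    lexRank δ F q (x ++ y) =
      sumLexBelow (fun z => ucomp δ F (deltaStar δ q z) y.length) x +
        lexRank δ F (deltaStar δ q x) y := by
  have hofFn_eq : ∀ f : Fin x.length → Γ, List.ofFn f = x ↔ f = fun i => x[i] := fun f => by
    rw [← List.ofFn_inj]
    simp
  conv_lhs => rw [lexRank, ncard_setOf_length_eq, List.length_append,
    ← (Fin.appendEquiv _ _).sum_comp, Fintype.sum_prod_type]
  simp only [Fin.appendEquiv, Equiv.coe_fn_mk, List.ofFn_fin_append, deltaStar_append,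
    lex_append_append_iff List.length_ofFn]
  trans ∑ f : Fin x.length → Γ,
    ((if List.Lex (· < ·) (List.ofFn f) x then ucomp δ F (deltaStar δ q (List.ofFn f)) y.length
      else 0) + if List.ofFn f = x then lexRank δ F (deltaStar δ q x) y else 0)
  · refine Finset.sum_congr rfl fun f _ => ?_
    by_cases hlt : List.Lex (· < ·) (List.ofFn f) x
    · have hne : List.ofFn f ≠ x := fun h =>
        List.lex_irrefl lt_irrefl x (by rwa [h] at hlt)
      simp only [hlt, hne, true_or, and_true, if_true, if_false, add_zero, ucomp,
        ncard_setOf_length_eq]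
    · by_cases heq : List.ofFn f = x
      · simp only [heq, List.lex_irrefl lt_irrefl, false_or, true_and, if_true, if_false,
          zero_add, lexRank, ncard_setOf_length_eq]
      · simp [hlt, heq]
  · simp only [Finset.sum_add_distrib, hofFn_eq, Fintype.sum_ite_eq', sumLexBelow,
      Finset.sum_filter]

end LexRank

section FreqRatio

variable {Γ Q : Type*} (δ : Q → Γ → Q) (F : Set Q)

/-- The quotient whose limit is `r_x` in (H2). -/
noncomputable def freqRatio (q0 : Q) (x : List Γ) (n : ℕ) : ℝ :=
  (ucomp δ F (deltaStar δ q0 x) (n - x.length) : ℝ) / (vcomp δ F q0 n : ℝ)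

end FreqRatio

section Value

variable {Γ : Type*} [Fintype Γ] [LinearOrder Γ] {Q : Type*} (δ : Q → Γ → Q) (F : Set Q)

theorem valS_eq (q0 : Q) (y : List Γ) :
    valS {x | deltaStar δ q0 x ∈ F} y =
      ∑ m ∈ Finset.range y.length, ucomp δ F q0 m + lexRank δ F q0 y := by
  have hsplit : {x ∈ {x | deltaStar δ q0 x ∈ F} | genLt x y} =
      {x | x.length < y.length ∧ deltaStar δ q0 x ∈ F} ∪
        {x | x.length = y.length ∧ deltaStar δ q0 x ∈ F ∧ List.Lex (· < ·) x y} := by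
    ext x
    simp only [genLt, Set.mem_ofPred_eq, Set.mem_union]
    tauto
  have hdisj : Disjoint {x : List Γ | x.length < y.length ∧ deltaStar δ q0 x ∈ F}
      {x | x.length = y.length ∧ deltaStar δ q0 x ∈ F ∧ List.Lex (· < ·) x y} :=
    Set.disjoint_left.2 fun _ h1 h2 => h1.1.ne h2.1
  rw [valS, hsplit, Set.ncard_union_eq hdisj (finite_setOf_length_lt _ _)
    (finite_setOf_length_eq _ _), ncard_setOf_length_lt]
  rfl

/-- The estimate of `val_S(y) / v_{q₀}(n)`, for `|y| = n`, read off a prefix `x` of `y`. -/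
noncomputable def valSApprox (q0 : Q) (x : List Γ) (n : ℕ) : ℝ :=
  1 - freqRatio δ F q0 [] n + sumLexBelow (fun z => freqRatio δ F q0 z n) x

theorem valS_div_vcomp_bounds (q0 : Q) (x y : List Γ) (hxy : deltaStar δ q0 (x ++ y) ∈ F) :
    valSApprox δ F q0 x (x ++ y).length ≤
        valS {z | deltaStar δ q0 z ∈ F} (x ++ y) / (vcomp δ F q0 (x ++ y).length : ℝ) ∧
      valS {z | deltaStar δ q0 z ∈ F} (x ++ y) / (vcomp δ F q0 (x ++ y).length : ℝ) ≤
        valSApprox δ F q0 x (x ++ y).length + freqRatio δ F q0 x (x ++ y).length := by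
  set N := (x ++ y).length with hN
  have hylen : N - x.length = y.length := by simp [hN]
  have hv : (vcomp δ F q0 N : ℝ) = ∑ m ∈ Finset.range N, (ucomp δ F q0 m : ℝ) + ucomp δ F q0 N := by
    rw [vcomp, Finset.sum_range_succ]
    push_cast
    rfl
  have hvpos : (0 : ℝ) < vcomp δ F q0 N := by
    have hu : 0 < ucomp δ F q0 N :=
      (Set.ncard_pos (finite_setOf_length_eq _ _)).2 ⟨x ++ y, rfl, hxy⟩
    rw [hv]
    positivity
  have hnil : freqRatio δ F q0 [] N = ucomp δ F q0 N / vcomp δ F q0 N := rfl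
  have hsum : sumLexBelow (fun z => freqRatio δ F q0 z N) x =
      (sumLexBelow (fun z => ucomp δ F (deltaStar δ q0 z) y.length) x : ℕ) / vcomp δ F q0 N := by
    simp only [sumLexBelow, Nat.cast_sum, Finset.sum_div, freqRatio, List.length_ofFn, hylen]
  have hR := lexRank_le_ucomp δ F (deltaStar δ q0 x) y
  have hval : valS {z | deltaStar δ q0 z ∈ F} (x ++ y) / (vcomp δ F q0 N : ℝ) =
      valSApprox δ F q0 x N + lexRank δ F (deltaStar δ q0 x) y / vcomp δ F q0 N := by
    rw [valSApprox, hnil, hsum, valS_eq, lexRank_append]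
    push_cast
    field_simp
    rw [hv, ← hN]
    ring
  rw [hval, freqRatio, hylen]
  constructor
  · have : (0 : ℝ) ≤ lexRank δ F (deltaStar δ q0 x) y / vcomp δ F q0 N := by positivity
    linarith
  · gcongr

end Value

section Centre

variable {Γ : Type*}

theorem mem_centre_of_forall_exists_append [Finite Γ] {L : Set (List Γ)} (hpc : pref L = L)
    {x : List Γ} (hx : ∀ m, ∃ z : List Γ, z.length = m ∧ x ++ z ∈ L) : x ∈ centre L := by
  -- König's lemma, via compactness of `Γ^ℕ` for the product of discrete topologies
  let _ : TopologicalSpace Γ := ⊥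
  have _ : DiscreteTopology Γ := ⟨rfl⟩
  have hcyl : ∀ (n : ℕ) (S : Set (List Γ)), IsClosed {w : ℕ → Γ | prefixOf w n ∈ S} :=
    fun n S => (isClosed_discrete {f : Fin n → Γ | List.ofFn f ∈ S}).preimage
      (continuous_pi fun i : Fin n => continuous_apply (i : ℕ) :
        Continuous fun (w : ℕ → Γ) (i : Fin n) => w i)
  let C : ℕ → Set (ℕ → Γ) := fun m =>
    {w | prefixOf w x.length ∈ ({x} : Set (List Γ))} ∩ {w | prefixOf w (x.length + m) ∈ L}
  have hC : (⋂ m, C m).Nonempty := by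
    refine IsCompact.nonempty_iInter_of_sequence_nonempty_isCompact_isClosed C
      (fun m w hw => ⟨hw.1, hpc ▸ ⟨_, hw.2, prefixOf_prefix w (by omega)⟩⟩) (fun m => ?_)
      (((hcyl _ _).inter (hcyl _ _)).isCompact) fun m => (hcyl _ _).inter (hcyl _ _)
    obtain ⟨a, -⟩ := List.length_eq_one_iff.1 (hx 1).choose_spec.1
    obtain ⟨z, rfl, hz⟩ := hx m
    refine ⟨fun i => (x ++ z).getD i a, ?_, ?_⟩ <;>
      simp only [Set.mem_ofPred_eq, Set.mem_singleton_iff]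
    · rw [← take_prefixOf _ (by simp : x.length ≤ (x ++ z).length), prefixOf_getD]
      simp
    · rwa [← List.length_append, prefixOf_getD]
  obtain ⟨w, hw⟩ := hC
  rw [Set.mem_iInter] at hw
  exact ⟨w, fun ℓ => ⟨_, (hw ℓ).2, prefixOf_prefix w (Nat.le_add_left ℓ x.length)⟩,
    ((hw 0).1 : _ = x).symm⟩

end Centre

section Limits

variable {Γ : Type*} [Fintype Γ] {Q : Type*} {δ : Q → Γ → Q} {F : Set Q} {q0 : Q}
  {r : List Γ → ℝ}

theorem eq_zero_of_notMem_centre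
    (hpc : pref {z | deltaStar δ q0 z ∈ F} = {z | deltaStar δ q0 z ∈ F})
    (hr : ∀ x, Tendsto (freqRatio δ F q0 x) atTop (𝓝 (r x))) {x : List Γ}
    (hx : x ∉ centre {z | deltaStar δ q0 z ∈ F}) : r x = 0 := by
  obtain ⟨m, hm⟩ : ∃ m, ∀ z : List Γ, z.length = m → deltaStar δ q0 (x ++ z) ∉ F := by
    by_contra! h
    exact hx (mem_centre_of_forall_exists_append hpc h)
  refine tendsto_nhds_unique (hr x) (tendsto_const_nhds.congr' ?_)
  filter_upwards [eventually_ge_atTop (x.length + m)] with n hn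
  have hempty : ucomp δ F (deltaStar δ q0 x) (n - x.length) = 0 := by
    refine (Set.ncard_eq_zero (finite_setOf_length_eq _ _)).2 <| Set.eq_empty_of_forall_notMem ?_
    rintro z ⟨hz, hzF⟩
    have hxz : x ++ z ∈ {z | deltaStar δ q0 z ∈ F} := by rwa [Set.mem_ofPred_eq, deltaStar_append]
    have hpref : x ++ z.take m ∈ pref {z | deltaStar δ q0 z ∈ F} :=
      ⟨x ++ z, hxz, (List.prefix_append_right_inj x).2 (List.take_prefix m z)⟩
    have hmem : x ++ z.take m ∈ {z | deltaStar δ q0 z ∈ F} := hpc ▸ hpref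
    exact hm (z.take m) (by simp; omega) hmem
  simp [freqRatio, hempty]

variable [LinearOrder Γ]

theorem alphaFin_eq_of_eq_zero {L : Set (List Γ)} (hr : ∀ x ∉ centre L, r x = 0) (y : List Γ) :
    alphaFin L r y = 1 - r [] + sumLexBelow r y := by
  rw [alphaFin, sumLexBelow, Finset.sum_filter]
  congr 1
  refine Finset.sum_congr rfl fun f _ => ?_
  by_cases hc : List.ofFn f ∈ centre L <;> simp [hc, hr]

theorem tendsto_valSApprox (hr : ∀ x, Tendsto (freqRatio δ F q0 x) atTop (𝓝 (r x)))
    {N : ℕ → ℕ} (hN : Tendsto N atTop atTop) (y : List Γ) :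
    Tendsto (fun n => valSApprox δ F q0 y (N n)) atTop (𝓝 (1 - r [] + sumLexBelow r y)) :=
  (tendsto_const_nhds.sub ((hr []).comp hN)).add
    (tendsto_finsetSum _ fun _ _ => (hr _).comp hN)

end Limits

theorem stmt_18_general {Γ : Type*} [Fintype Γ] [LinearOrder Γ]
    (K : Set (List Γ))
    (L : Set (List Γ)) (hLdef : L = pref K) (hpc : pref L = L)
    {Q : Type*} (q0 : Q) (δ : Q → Γ → Q) (F : Set Q)
    (hL : L = {x | deltaStar δ q0 x ∈ F})
    (r : List Γ → ℝ)
    (hH2 : ∀ x : List Γ,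
      Tendsto (fun n : ℕ =>
          (ucomp δ F (deltaStar δ q0 x) (n - x.length) : ℝ) / (vcomp δ F q0 n : ℝ))
        atTop (𝓝 (r x)))
    (hH3 : ∀ w ∈ adh L, Tendsto (fun ℓ : ℕ => r (prefixOf w ℓ)) atTop (𝓝 0))
    (ws : ℕ → List Γ) (hws : ∀ n, ws n ∈ K)
    (w : ℕ → Γ)
    (hconv : ∀ ℓ : ℕ, ∃ N : ℕ, ∀ n ≥ N, prefixOf w ℓ <+: ws n)
    (aw : ℝ)
    (haw : Tendsto (fun ℓ : ℕ => alphaFin L r (prefixOf w ℓ)) atTop (𝓝 aw)) :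
    Tendsto (fun n : ℕ => (valS L (ws n) : ℝ) / (vcomp δ F q0 (ws n).length : ℝ))
      atTop (𝓝 aw) := by
  subst hL
  have hwsL : ∀ n, ws n ∈ {x | deltaStar δ q0 x ∈ F} := fun n =>
    hLdef ▸ ⟨ws n, hws n, List.prefix_rfl⟩
  have hw : w ∈ adh {x | deltaStar δ q0 x ∈ F} := fun ℓ =>
    let ⟨N, hN⟩ := hconv ℓ
    ⟨ws N, hwsL N, hN N le_rfl⟩
  have hlen : Tendsto (fun n => (ws n).length) atTop atTop :=
    tendsto_atTop_atTop.2 fun ℓ =>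
      let ⟨N, hN⟩ := hconv ℓ
      ⟨N, fun n hn => prefixOf_length w ℓ ▸ (hN n hn).length_le⟩
  simp only [alphaFin_eq_of_eq_zero fun x hx => eq_zero_of_notMem_centre hpc hH2 hx] at haw
  refine tendsto_of_forall_eventually_between (g := atTop)
    (fun ℓ => tendsto_valSApprox hH2 hlen (prefixOf w ℓ))
    (fun ℓ => (tendsto_valSApprox hH2 hlen (prefixOf w ℓ)).add ((hH2 _).comp hlen)) haw
    (by simpa using haw.add (hH3 w hw)) fun ℓ => ?_
  obtain ⟨N, hN⟩ := hconv ℓ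
  filter_upwards [eventually_ge_atTop N] with n hn
  obtain ⟨s, hs⟩ := hN n hn
  rw [Function.comp_apply, ← hs]
  exact valS_div_vcomp_bounds δ F q0 _ s (hs ▸ hwsL n)

theorem stmt_18 {Γ : Type*} [Fintype Γ] [LinearOrder Γ]
    (K : Set (List Γ)) (hK : K.Infinite)
    (L : Set (List Γ)) (hLdef : L = pref K) (hpc : pref L = L)
    {Q : Type*} (q0 : Q) (δ : Q → Γ → Q) (F : Set Q)
    (hacc : ∀ q : Q, ∃ x : List Γ, deltaStar δ q0 x = q)
    (hL : L = {x | deltaStar δ q0 x ∈ F})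
    (r : List Γ → ℝ)
    (hH2 : ∀ x : List Γ,
      Tendsto (fun n : ℕ =>
          (ucomp δ F (deltaStar δ q0 x) (n - x.length) : ℝ) / (vcomp δ F q0 n : ℝ))
        atTop (𝓝 (r x)))
    (hH3 : ∀ w ∈ adh L, Tendsto (fun ℓ : ℕ => r (prefixOf w ℓ)) atTop (𝓝 0))
    (ws : ℕ → List Γ) (hws : ∀ n, ws n ∈ K)
    (w : ℕ → Γ)
    (hconv : ∀ ℓ : ℕ, ∃ N : ℕ, ∀ n ≥ N, prefixOf w ℓ <+: ws n)
    (aw : ℝ)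
    (haw : Tendsto (fun ℓ : ℕ => alphaFin L r (prefixOf w ℓ)) atTop (𝓝 aw)) :
    Tendsto (fun n : ℕ => (valS L (ws n) : ℝ) / (vcomp δ F q0 (ws n).length : ℝ))
      atTop (𝓝 aw) :=
  stmt_18_general K L hLdef hpc q0 δ F hL r hH2 hH3 ws hws w hconv aw haw
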